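/- Let b>0, n,m∈ℕ₀, and α,β≥0. If n≥m and β ≥ α+n−m, then C_α^n([b,∞)) ⊆ C_β^m([b,∞)), and for every f∈C_α^n([b,∞)) one has ‖f‖_{C_β^m([b,∞))} ≤ ((m+1)/b^{β−α−n+m}) · ‖f‖_{C_α^n([b,∞))}. -/

import Mathlib

open Set Filter MeasureTheory Topology

noncomputable section

/-- Membership in the space `C_α^n([b,∞))`: `f` is `n`-times continuously differentiable
on `[b,∞)` and its `n`-th derivative satisfies a polynomial bound `M·y^α`. -/
def MemCnAlpha (b : ℝ) (n : ℕ) (α : ℝ) (f : ℝ → ℂ) : Prop :=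
  ContDiffOn ℝ n f (Set.Ici b) ∧
    ∃ M : ℝ, 0 ≤ M ∧ ∀ y ∈ Set.Ici b, ‖iteratedDerivWithin n f (Set.Ici b) y‖ ≤ M * y ^ α

/-- The norm on the space `C_α^n([b,∞))`. -/
def CnAlphaNorm (b : ℝ) (n : ℕ) (α : ℝ) (f : ℝ → ℂ) : ℝ :=
  (∑ k ∈ Finset.range n, ‖iteratedDerivWithin k f (Set.Ici b) b‖ / b ^ ((n : ℝ) - k + α)) +
    ⨆ y : Set.Ici b, ‖iteratedDerivWithin n f (Set.Ici b) y‖ / (y : ℝ) ^ α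

/-! Every derivative `f^{(k)}`, `k ≤ n`, satisfies `‖f^{(k)}(y)‖ ≤ ‖f‖ · y^{α+n-k}` on `[b,∞)`.
For `k = n` this is the supremum part of the norm; from `k + 1` down to `k` one integrates,
starting from the bound on `f^{(k)}(b)` given by the `k`-th boundary term, and the constant does
not grow because `p = α + n - k ≥ 1` makes `y^{p-1} ≤ p y^{p-1}`. As the exponents of
`‖f‖_{C_β^m}` exceed these by `β - α - n + m ≥ 0` and `y ≥ b`, each of its `m + 1` terms is at most
`‖f‖_{C_α^n} / b^{β-α-n+m}`. -/

theorem Real.rpow_sub_le_div_rpow {b y γ δ : ℝ} (hb : 0 < b) (hy : b ≤ y) (hδ : 0 ≤ δ) :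
    y ^ (γ - δ) ≤ y ^ γ / b ^ δ := by
  have hy₀ : 0 < y := hb.trans_le hy
  rw [Real.rpow_sub hy₀]
  exact div_le_div_of_nonneg_left (by positivity) (by positivity) (Real.rpow_le_rpow hb.le hy hδ)

theorem norm_le_mul_rpow_of_norm_derivWithin_le {E : Type*} [NormedAddCommGroup E]
    [NormedSpace ℝ E] {g : ℝ → E} {b A p : ℝ} (hb : 0 < b) (hg : DifferentiableOn ℝ g (Ici b))
    (hgb : ‖g b‖ ≤ A * b ^ p)
    (hg' : ∀ x, b ≤ x → ‖derivWithin g (Ici b) x‖ ≤ A * (p * x ^ (p - 1)))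
    {y : ℝ} (hy : b ≤ y) : ‖g y‖ ≤ A * y ^ p := by
  have hB : ∀ x ∈ Ici b, HasDerivAt (fun t => A * t ^ p) (A * (p * x ^ (p - 1))) x := fun x hx =>
    (Real.hasDerivAt_rpow_const (Or.inl (hb.trans_le hx).ne')).const_mul A
  refine image_norm_le_of_norm_deriv_right_le_deriv_boundary'
    (hg.continuousOn.mono Icc_subset_Ici_self)
    (fun x hx => (hg x hx.1).hasDerivWithinAt.mono (Ici_subset_Ici.2 hx.1)) hgb
    (fun x hx => (hB x hx.1).continuousAt.continuousWithinAt)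
    (fun x hx => (hB x hx.1).hasDerivWithinAt) (fun x hx => hg' x hx.1) (right_mem_Icc.2 hy)

section CnAlpha

variable {b : ℝ} {n : ℕ} {α : ℝ} {f : ℝ → ℂ}

theorem cnAlphaNorm_boundarySum_nonneg (hb : 0 < b) :
    0 ≤ ∑ k ∈ Finset.range n, ‖iteratedDerivWithin k f (Ici b) b‖ / b ^ ((n : ℝ) - k + α) :=
  Finset.sum_nonneg fun _ _ => div_nonneg (norm_nonneg _) (Real.rpow_nonneg hb.le _)

theorem cnAlphaNorm_iSup_nonneg (hb : 0 < b) :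
    0 ≤ ⨆ y : Ici b, ‖iteratedDerivWithin n f (Ici b) y‖ / (y : ℝ) ^ α :=
  Real.iSup_nonneg fun y => div_nonneg (norm_nonneg _) (Real.rpow_nonneg (hb.le.trans y.2) _)

theorem cnAlphaNorm_nonneg (hb : 0 < b) : 0 ≤ CnAlphaNorm b n α f :=
  add_nonneg (cnAlphaNorm_boundarySum_nonneg hb) (cnAlphaNorm_iSup_nonneg hb)

theorem MemCnAlpha.norm_iteratedDerivWithin_le (hb : 0 < b) (hf : MemCnAlpha b n α f) {y : ℝ}
    (hy : b ≤ y) : ‖iteratedDerivWithin n f (Ici b) y‖ ≤ CnAlphaNorm b n α f * y ^ α := by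
  obtain ⟨M, -, hM⟩ := hf.2
  have hbdd : BddAbove (range fun z : Ici b => ‖iteratedDerivWithin n f (Ici b) z‖ / (z : ℝ) ^ α) :=
    ⟨M, by
      rintro _ ⟨z, rfl⟩
      exact (div_le_iff₀ (Real.rpow_pos_of_pos (hb.trans_le z.2) _)).2 (hM z z.2)⟩
  have hsup : ‖iteratedDerivWithin n f (Ici b) y‖ / y ^ α ≤ CnAlphaNorm b n α f :=
    (le_ciSup hbdd ⟨y, hy⟩).trans (le_add_of_nonneg_left (cnAlphaNorm_boundarySum_nonneg hb))
  rwa [div_le_iff₀ (Real.rpow_pos_of_pos (hb.trans_le hy) _)] at hsup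

theorem norm_iteratedDerivWithin_left_le_cnAlphaNorm (hb : 0 < b) {k : ℕ} (hk : k < n) :
    ‖iteratedDerivWithin k f (Ici b) b‖ ≤ CnAlphaNorm b n α f * b ^ (α + n - k) := by
  have hterm : ‖iteratedDerivWithin k f (Ici b) b‖ / b ^ ((n : ℝ) - k + α) ≤ CnAlphaNorm b n α f :=
    (Finset.single_le_sum
      (f := fun j => ‖iteratedDerivWithin j f (Ici b) b‖ / b ^ ((n : ℝ) - j + α))
      (fun _ _ => div_nonneg (norm_nonneg _) (Real.rpow_nonneg hb.le _))
      (Finset.mem_range.2 hk)).trans (le_add_of_nonneg_right (cnAlphaNorm_iSup_nonneg hb))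
  rw [div_le_iff₀ (Real.rpow_pos_of_pos hb _)] at hterm
  rwa [show α + n - k = (n : ℝ) - k + α by ring]

theorem MemCnAlpha.norm_iteratedDerivWithin_le_of_le (hb : 0 < b) (hα : 0 ≤ α)
    (hf : MemCnAlpha b n α f) {k : ℕ} (hk : k ≤ n) {y : ℝ} (hy : b ≤ y) :
    ‖iteratedDerivWithin k f (Ici b) y‖ ≤ CnAlphaNorm b n α f * y ^ (α + n - k) := by
  induction hk using Nat.decreasingInduction generalizing y with
  | self => simpa using hf.norm_iteratedDerivWithin_le hb hy
  | of_succ k hkn ih =>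
    have hdiff : DifferentiableOn ℝ (iteratedDerivWithin k f (Ici b)) (Ici b) :=
      hf.1.differentiableOn_iteratedDerivWithin (by exact_mod_cast hkn) (uniqueDiffOn_Ici b)
    refine norm_le_mul_rpow_of_norm_derivWithin_le hb hdiff
      (norm_iteratedDerivWithin_left_le_cnAlphaNorm hb hkn) (fun x hx => ?_) hy
    have hexp : α + n - k - 1 = α + n - ((k + 1 : ℕ) : ℝ) := by push_cast; ring
    have hp : (1 : ℝ) ≤ α + n - k := by
      have : (k : ℝ) + 1 ≤ n := by exact_mod_cast hkn
      linarith
    rw [← iteratedDerivWithin_succ, hexp]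
    calc ‖iteratedDerivWithin (k + 1) f (Ici b) x‖
        ≤ CnAlphaNorm b n α f * x ^ (α + n - ((k + 1 : ℕ) : ℝ)) := ih hx
      _ ≤ (α + n - k) * (CnAlphaNorm b n α f * x ^ (α + n - ((k + 1 : ℕ) : ℝ))) :=
        le_mul_of_one_le_left
          (mul_nonneg (cnAlphaNorm_nonneg hb) (Real.rpow_nonneg (hb.le.trans hx) _)) hp
      _ = _ := by ring

theorem MemCnAlpha.norm_iteratedDerivWithin_div_rpow_le (hb : 0 < b) (hα : 0 ≤ α)
    (hf : MemCnAlpha b n α f) {m : ℕ} {β : ℝ} (hβ : α + (n : ℝ) - m ≤ β) {k : ℕ} (hkm : k ≤ m)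
    (hmn : m ≤ n) {y : ℝ} (hy : b ≤ y) :
    ‖iteratedDerivWithin k f (Ici b) y‖ / y ^ ((m : ℝ) - k + β) ≤
      CnAlphaNorm b n α f / b ^ (β - α - n + m) := by
  have hrpow : y ^ (α + n - k) ≤ y ^ ((m : ℝ) - k + β) / b ^ (β - α - n + m) := by
    have := Real.rpow_sub_le_div_rpow (γ := (m : ℝ) - k + β) (δ := β - α - n + m) hb hy
      (by linarith)
    rwa [show (m : ℝ) - k + β - (β - α - n + m) = α + n - k by ring] at this
  rw [div_le_iff₀ (Real.rpow_pos_of_pos (hb.trans_le hy) _), div_mul_comm]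
  calc ‖iteratedDerivWithin k f (Ici b) y‖
      ≤ CnAlphaNorm b n α f * y ^ (α + n - k) :=
        hf.norm_iteratedDerivWithin_le_of_le hb hα (hkm.trans hmn) hy
    _ ≤ CnAlphaNorm b n α f * (y ^ ((m : ℝ) - k + β) / b ^ (β - α - n + m)) :=
        mul_le_mul_of_nonneg_left hrpow (cnAlphaNorm_nonneg hb)
    _ = _ := by ring

end CnAlpha

theorem stmt3_general (b : ℝ) (hb : 0 < b) (n m : ℕ) (α β : ℝ) (hα : 0 ≤ α)
    (hnm : m ≤ n) (hβ : α + (n : ℝ) - m ≤ β) (f : ℝ → ℂ) (hf : MemCnAlpha b n α f) :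
    MemCnAlpha b m β f ∧
      CnAlphaNorm b m β f ≤ ((m : ℝ) + 1) / b ^ (β - α - (n : ℝ) + m) * CnAlphaNorm b n α f := by
  set C := CnAlphaNorm b n α f / b ^ (β - α - n + m)
  have hC : 0 ≤ C := div_nonneg (cnAlphaNorm_nonneg hb) (Real.rpow_nonneg hb.le _)
  have hbound := fun {k : ℕ} (hkm : k ≤ m) {y : ℝ} (hy : b ≤ y) =>
    hf.norm_iteratedDerivWithin_div_rpow_le hb hα hβ hkm hnm hy
  have htop : ∀ y : Ici b, ‖iteratedDerivWithin m f (Ici b) y‖ / (y : ℝ) ^ β ≤ C := fun y => by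
    simpa using hbound le_rfl y.2
  refine ⟨⟨hf.1.of_le (by exact_mod_cast hnm), C, hC, fun y hy => ?_⟩, ?_⟩
  · exact (div_le_iff₀ (Real.rpow_pos_of_pos (hb.trans_le hy) _)).1 (htop ⟨y, hy⟩)
  · have hsum : ∑ k ∈ Finset.range m,
        ‖iteratedDerivWithin k f (Ici b) b‖ / b ^ ((m : ℝ) - k + β) ≤ m * C := by
      simpa using Finset.sum_le_card_nsmul _ _ C
        fun k hk => hbound (Finset.mem_range.1 hk).le le_rfl
    calc CnAlphaNorm b m β f ≤ m * C + C := add_le_add hsum (Real.iSup_le htop hC)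
      _ = _ := by ring

/-- if `n ≥ m` and `β ≥ α + n - m`, then `C_α^n([b,∞)) ⊆ C_β^m([b,∞))` with
`‖f‖_{C_β^m} ≤ ((m+1)/b^{β-α-n+m})·‖f‖_{C_α^n}`. -/
theorem stmt3 (b : ℝ) (hb : 0 < b) (n m : ℕ) (α β : ℝ) (hα : 0 ≤ α) (hβ0 : 0 ≤ β)
    (hnm : m ≤ n) (hβ : α + (n : ℝ) - m ≤ β) (f : ℝ → ℂ) (hf : MemCnAlpha b n α f) :
    MemCnAlpha b m β f ∧
      CnAlphaNorm b m β f ≤ ((m : ℝ) + 1) / b ^ (β - α - (n : ℝ) + m) * CnAlphaNorm b n α f :=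
  stmt3_general b hb n m α β hα hnm hβ f hf
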